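/- arXiv:2501.16262 — 2 statements merged into one kernel-verified Lean document; each statement's English description precedes it below -/
import Mathlib

section
/- For real skew-symmetric n×n matrices A and B, the operator norm of exp(A) − exp(B) is at most the operator norm of A − B. -/
/-!
Let `f s = exp (s • A) * exp ((1 - s) • B)`, so that `f 1 = exp A` and `f 0 = exp B`. Its
derivative is `exp (s • A) * (A - B) * exp ((1 - s) • B)`, and for skew-adjoint `A`, `B` both
exponential factors are unitary, so the derivative has norm `‖A - B‖`. The mean value inequality
on `[0, 1]` gives the bound.
-/

open Matrix NormedSpace

open scoped Matrix.Norms.L2Operator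

theorem hasDerivAt_exp_smul_mul_exp_one_sub_smul {𝕂 𝔸 : Type*} [RCLike 𝕂] [NormedRing 𝔸]
    [NormedAlgebra 𝕂 𝔸] [CompleteSpace 𝔸] (a b : 𝔸) (t : 𝕂) :
    HasDerivAt (fun s : 𝕂 => exp (s • a) * exp ((1 - s) • b))
      (exp (t • a) * (a - b) * exp ((1 - t) • b)) t := by
  have hb : HasDerivAt (fun s : 𝕂 => exp ((1 - s) • b)) (-(b * exp ((1 - t) • b))) t := by
    simpa [Function.comp_def] using
      (hasDerivAt_exp_smul_const' b (1 - t)).scomp t ((hasDerivAt_id t).const_sub 1)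
  refine ((hasDerivAt_exp_smul_const a t).mul hb).congr_deriv ?_
  rw [mul_neg, ← sub_eq_add_neg, mul_sub, sub_mul, mul_assoc, mul_assoc]

theorem norm_exp_sub_exp_le_of_mem_skewAdjoint {𝔸 : Type*} [NormedRing 𝔸] [NormedAlgebra ℝ 𝔸]
    [CompleteSpace 𝔸] [StarRing 𝔸] [CStarRing 𝔸] [StarModule ℝ 𝔸] {a b : 𝔸}
    (ha : a ∈ skewAdjoint 𝔸) (hb : b ∈ skewAdjoint 𝔸) :
    ‖exp a - exp b‖ ≤ ‖a - b‖ := by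
  let _ : NormedAlgebra ℚ 𝔸 := .restrictScalars ℚ ℝ 𝔸
  have exp_smul_mem_unitary : ∀ (c : 𝔸) (s : ℝ), c ∈ skewAdjoint 𝔸 → exp (s • c) ∈ unitary 𝔸 :=
    fun c s hc => exp_mem_unitary_of_mem_skewAdjoint (skewAdjoint.smul_mem s hc)
  simpa using norm_image_sub_le_of_norm_deriv_le_segment_01'
    (fun t _ => (hasDerivAt_exp_smul_mul_exp_one_sub_smul a b t).hasDerivWithinAt)
    (fun t _ => by
      rw [CStarRing.norm_mul_mem_unitary _ (exp_smul_mem_unitary b _ hb),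
        CStarRing.norm_mem_unitary_mul _ (exp_smul_mem_unitary a t ha)])

theorem Matrix.mem_skewAdjoint_of_transpose_eq_neg {n R : Type*} [AddCommGroup R]
    [StarAddMonoid R] [TrivialStar R] {A : Matrix n n R} (hA : Aᵀ = -A) :
    A ∈ skewAdjoint (Matrix n n R) := by
  rw [skewAdjoint.mem_iff, star_eq_conjTranspose, conjTranspose_eq_transpose_of_trivial, hA]

/-- For real skew-symmetric matrices `A`, `B`, one has
`‖exp(A) − exp(B)‖ ≤ ‖A − B‖` in the operator norm. -/
theorem exp_skew_lipschitz {n : ℕ} (A B : Matrix (Fin n) (Fin n) ℝ)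
    (hA : Aᵀ = -A) (hB : Bᵀ = -B) :
    ‖NormedSpace.exp A - NormedSpace.exp B‖ ≤ ‖A - B‖ :=
  norm_exp_sub_exp_le_of_mem_skewAdjoint (mem_skewAdjoint_of_transpose_eq_neg hA)
    (mem_skewAdjoint_of_transpose_eq_neg hB)
end

section
/- Let J : ℝ^{d₂} → Matrix (Fin d₁) (Fin d₁) ℝ be linear with each J(μ) skew-symmetric, such that dim ker J(μ) is constant for μ ≠ 0 and the nonzero eigenvalues of −J(ω)² are bounded below by c² > 0 uniformly for ω in the unit sphere. Then the map μ ↦ P₀(μ) assigning the orthogonal projection onto ker J(μ) is Lipschitz on the unit sphere: there is κ > 0 with ‖P₀(μ) − P₀(μ')‖ ≤ κ‖J(μ) − J(μ')‖ ≤ κ'|μ − μ'| for all unit vectors μ, μ'. -/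
/-!
Let `B(μ) = J(μ)ᵀ J(μ) = -J(μ)²`; its kernel is `ker J(μ)`, and the spectral gap makes `B(μ')`
coercive with constant `c²` on `(ker J(μ'))ᗮ`. For `x` in the range of `P = P₀(μ)`, the vector
`w = (1 - Q) x`, `Q = P₀(μ')`, lies in that complement and `B(μ') w = (B(μ') - B(μ)) x`, so
`c² ‖(1 - Q) P‖ ≤ ‖B(μ') - B(μ)‖ ≤ (‖J(μ)‖ + ‖J(μ')‖) ‖J(μ) - J(μ')‖`. Since
`P - Q = (1 - Q) P - ((1 - P) Q)ᵀ`, the same bound with the roles exchanged controls `‖P - Q‖`.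
-/

open Matrix
open scoped Matrix.Norms.L2Operator RealInnerProductSpace

section NormedStarRing

variable {R : Type*} [NormedRing R] [StarRing R] [NormedStarGroup R]

lemma IsSelfAdjoint.norm_sub_le_norm_one_sub_mul_add {p q : R} (hp : IsSelfAdjoint p)
    (hq : IsSelfAdjoint q) :
    ‖p - q‖ ≤ ‖(1 - q) * p‖ + ‖(1 - p) * q‖ := by
  have hsplit : p - q = (1 - q) * p - star ((1 - p) * q) := by
    rw [star_mul, star_sub, star_one, hp.star_eq, hq.star_eq]
    noncomm_ring
  rw [hsplit, ← norm_star ((1 - p) * q)]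
  exact _root_.norm_sub_le _ _

lemma norm_star_mul_self_sub_star_mul_self_le (a b : R) :
    ‖star b * b - star a * a‖ ≤ (‖a‖ + ‖b‖) * ‖b - a‖ :=
  calc ‖star b * b - star a * a‖ = ‖star b * (b - a) + star (b - a) * a‖ := by
        rw [star_sub]; noncomm_ring
    _ ≤ ‖b‖ * ‖b - a‖ + ‖b - a‖ * ‖a‖ := by
        grw [norm_add_le, norm_mul_le, norm_mul_le, norm_star, norm_star]
    _ = (‖a‖ + ‖b‖) * ‖b - a‖ := by ring

end NormedStarRing

section InnerProductSpace

variable {E : Type*} [NormedAddCommGroup E] [InnerProductSpace ℝ E]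

lemma LinearMap.IsSymmetric.mul_norm_sq_le_inner_of_mem_orthogonal_ker [FiniteDimensional ℝ E]
    {T : E →ₗ[ℝ] E} (hT : T.IsSymmetric) {γ : ℝ}
    (hgap : ∀ t, Module.End.HasEigenvalue T t → t ≠ 0 → γ ≤ t)
    {w : E} (hw : w ∈ T.kerᗮ) :
    γ * ‖w‖ ^ 2 ≤ ⟪w, T w⟫ := by
  set b := hT.eigenvectorBasis rfl
  set ev := hT.eigenvalues rfl
  have hb : ∀ i, T (b i) = ev i • b i := hT.apply_eigenvectorBasis rfl
  have hterm : ∀ i, γ * ⟪b i, w⟫ ^ 2 ≤ ev i * ⟪b i, w⟫ ^ 2 := fun i => by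
    by_cases hev : ev i = 0
    · have hbi : b i ∈ T.ker := by rw [LinearMap.mem_ker, hb, hev, zero_smul]
      simp [Submodule.inner_right_of_mem_orthogonal hbi hw]
    · gcongr
      exact hgap _ (hT.hasEigenvalue_eigenvalues rfl i) hev
  have hexpand : ∀ v, ⟪w, v⟫ = ∑ i, ⟪b i, w⟫ * ⟪b i, v⟫ := fun v => by
    simp_rw [← b.sum_inner_mul_inner w v, real_inner_comm w]
  calc γ * ‖w‖ ^ 2 = ∑ i, γ * ⟪b i, w⟫ ^ 2 := by
        rw [← real_inner_self_eq_norm_sq, hexpand, Finset.mul_sum]; simp_rw [sq]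
    _ ≤ ∑ i, ev i * ⟪b i, w⟫ ^ 2 := Finset.sum_le_sum fun i _ => hterm i
    _ = ⟪w, T w⟫ := by
        rw [hexpand]
        refine Finset.sum_congr rfl fun i _ => ?_
        rw [← hT, hb, real_inner_smul_left]; ring

lemma IsStarProjection.ker_le_orthogonal_ker [CompleteSpace E] {P S : E →L[ℝ] E}
    (hP : IsStarProjection P) (hS : ∀ v, S v = 0 → P v = v) : P.ker ≤ S.kerᗮ := by
  intro w hw v hv
  rw [← hS v hv]
  simpa [LinearMap.mem_ker.mp hw] using hP.isSelfAdjoint.isSymmetric v w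

lemma ContinuousLinearMap.norm_one_sub_mul_le_of_coercive_on_ker [CompleteSpace E]
    {P Q A B : E →L[ℝ] E} (hP : IsStarProjection P) (hQ : IsIdempotentElem Q)
    (hAP : A * P = 0) (hBQ : B * Q = 0) {γ : ℝ} (hγ : 0 < γ)
    (hgap : ∀ w, Q w = 0 → γ * ‖w‖ ^ 2 ≤ ⟪w, B w⟫) :
    ‖(1 - Q) * P‖ ≤ ‖B - A‖ / γ := by
  refine opNorm_le_bound _ (by positivity) fun x => ?_
  set w := ((1 - Q) * P) x
  have hQw : Q w = 0 := by
    have : Q * ((1 - Q) * P) = 0 := by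
      rw [← mul_assoc, mul_sub, mul_one, hQ.eq, sub_self, zero_mul]
    exact congr($this x)
  have hBw : B w = (B - A) (P x) := by
    have : B * ((1 - Q) * P) = (B - A) * P := by
      rw [← mul_assoc, mul_sub, mul_one, hBQ, sub_zero, sub_mul, hAP, sub_zero]
    exact congr($this x)
  have hPx : ‖P x‖ ≤ ‖x‖ :=
    (P.le_opNorm x).trans (mul_le_of_le_one_left (norm_nonneg x) (hP.norm_le P))
  have hw : γ * ‖w‖ ^ 2 ≤ ‖w‖ * (‖B - A‖ * ‖x‖) :=
    calc γ * ‖w‖ ^ 2 ≤ ⟪w, B w⟫ := hgap w hQw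
      _ ≤ ‖w‖ * ‖B w‖ := real_inner_le_norm _ _
      _ ≤ ‖w‖ * (‖B - A‖ * ‖x‖) := by
          rw [hBw]; gcongr; exact ((B - A).le_opNorm _).trans (by gcongr)
  rw [div_mul_eq_mul_div, le_div_iff₀ hγ]
  rcases (norm_nonneg w).eq_or_lt with h0 | hpos
  · rw [← h0, zero_mul]; positivity
  · nlinarith

lemma ContinuousLinearMap.norm_one_sub_mul_le_of_eigenvalue_gap [FiniteDimensional ℝ E]
    {S T P Q : E →L[ℝ] E} (hP : IsStarProjection P) (hQ : IsStarProjection Q)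
    (hSP : S * P = 0) (hTQ : T * Q = 0) (hQT : ∀ v, T v = 0 → Q v = v) {γ : ℝ} (hγ : 0 < γ)
    (hgap : ∀ t, Module.End.HasEigenvalue ((star T * T : E →L[ℝ] E) : E →ₗ[ℝ] E) t →
      t ≠ 0 → γ ≤ t) :
    ‖(1 - Q) * P‖ ≤ ‖star T * T - star S * S‖ / γ := by
  have := FiniteDimensional.complete ℝ E
  refine norm_one_sub_mul_le_of_coercive_on_ker hP hQ.isIdempotentElem
    (by rw [mul_assoc, hSP, mul_zero]) (by rw [mul_assoc, hTQ, mul_zero]) hγ fun w hw => ?_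
  refine (IsSelfAdjoint.star_mul_self T).isSymmetric.mul_norm_sq_le_inner_of_mem_orthogonal_ker
    hgap ?_
  have hker : (star T * T).ker = T.ker := by
    rw [star_eq_adjoint]; exact ker_adjoint_comp_self T
  rw [hker]
  exact hQ.ker_le_orthogonal_ker hQT hw

lemma ContinuousLinearMap.norm_sub_le_of_eigenvalue_gap [FiniteDimensional ℝ E]
    {S T P Q : E →L[ℝ] E} (hP : IsStarProjection P) (hQ : IsStarProjection Q)
    (hSP : S * P = 0) (hTQ : T * Q = 0) (hPS : ∀ v, S v = 0 → P v = v)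
    (hQT : ∀ v, T v = 0 → Q v = v) {γ : ℝ} (hγ : 0 < γ)
    (hgapS : ∀ t, Module.End.HasEigenvalue ((star S * S : E →L[ℝ] E) : E →ₗ[ℝ] E) t →
      t ≠ 0 → γ ≤ t)
    (hgapT : ∀ t, Module.End.HasEigenvalue ((star T * T : E →L[ℝ] E) : E →ₗ[ℝ] E) t →
      t ≠ 0 → γ ≤ t) :
    ‖P - Q‖ ≤ 2 * (‖S‖ + ‖T‖) * ‖S - T‖ / γ := by
  have := FiniteDimensional.complete ℝ E
  calc ‖P - Q‖ ≤ ‖(1 - Q) * P‖ + ‖(1 - P) * Q‖ :=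
        hP.isSelfAdjoint.norm_sub_le_norm_one_sub_mul_add hQ.isSelfAdjoint
    _ ≤ ‖star T * T - star S * S‖ / γ + ‖star S * S - star T * T‖ / γ :=
        add_le_add (norm_one_sub_mul_le_of_eigenvalue_gap hP hQ hSP hTQ hQT hγ hgapT)
          (norm_one_sub_mul_le_of_eigenvalue_gap hQ hP hTQ hSP hPS hγ hgapS)
    _ ≤ (‖S‖ + ‖T‖) * ‖T - S‖ / γ + (‖T‖ + ‖S‖) * ‖S - T‖ / γ := by
        gcongr <;> exact norm_star_mul_self_sub_star_mul_self_le _ _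
    _ = 2 * (‖S‖ + ‖T‖) * ‖S - T‖ / γ := by rw [norm_sub_rev T]; ring

end InnerProductSpace

lemma Matrix.norm_sub_le_of_eigenvalue_gap {n : Type*} [Fintype n] [DecidableEq n]
    {M N P Q : Matrix n n ℝ} (hP : IsStarProjection P) (hQ : IsStarProjection Q)
    (hMP : ∀ x, M *ᵥ (P *ᵥ x) = 0) (hNQ : ∀ x, N *ᵥ (Q *ᵥ x) = 0)
    (hPM : ∀ x, M *ᵥ x = 0 → P *ᵥ x = x) (hQN : ∀ x, N *ᵥ x = 0 → Q *ᵥ x = x)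
    {γ : ℝ} (hγ : 0 < γ)
    (hgapM : ∀ t v, v ≠ 0 → (Mᵀ * M) *ᵥ v = t • v → t ≠ 0 → γ ≤ t)
    (hgapN : ∀ t v, v ≠ 0 → (Nᵀ * N) *ᵥ v = t • v → t ≠ 0 → γ ≤ t) :
    ‖P - Q‖ ≤ 2 * (‖M‖ + ‖N‖) * ‖M - N‖ / γ := by
  set f := toEuclideanCLM (n := n) (𝕜 := ℝ)
  have hmul {A B : Matrix n n ℝ} (h : ∀ x, A *ᵥ (B *ᵥ x) = 0) : f A * f B = 0 := by
    ext1 x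
    apply WithLp.ofLp_injective
    simp [f, h]
  have hfix {A B : Matrix n n ℝ} (h : ∀ x, A *ᵥ x = 0 → B *ᵥ x = x) (v) (hv : f A v = 0) :
      f B v = v := by
    have : A *ᵥ v.ofLp = 0 := by simpa [f] using congr(WithLp.ofLp $hv)
    ext1; simp [f, h _ this]
  have hstar (A : Matrix n n ℝ) : star (f A) * f A = f (Aᵀ * A) := by
    rw [← map_star, ← map_mul, star_eq_conjTranspose, conjTranspose_eq_transpose_of_trivial]
  have hgap {A : Matrix n n ℝ} (h : ∀ t v, v ≠ 0 → (Aᵀ * A) *ᵥ v = t • v → t ≠ 0 → γ ≤ t) (t)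
      (ht : Module.End.HasEigenvalue
        ((star (f A) * f A : EuclideanSpace ℝ n →L[ℝ] _) : EuclideanSpace ℝ n →ₗ[ℝ] _) t) :
      t ≠ 0 → γ ≤ t := by
    obtain ⟨v, hv, hv0⟩ := ht.exists_hasEigenvector
    rw [Module.End.mem_eigenspace_iff, hstar] at hv
    exact h t v.ofLp (by simpa using hv0) (by simpa [f] using congr(WithLp.ofLp $hv))
  have := ContinuousLinearMap.norm_sub_le_of_eigenvalue_gap (hP.map f) (hQ.map f)
    (hmul hMP) (hmul hNQ) (hfix hPM) (hfix hQN) hγ (hgap hgapM) (hgap hgapN)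
  rwa [← map_sub, ← map_sub] at this

theorem kernel_projection_lipschitz_general {d₁ d₂ : ℕ}
    (J : EuclideanSpace ℝ (Fin d₂) →ₗ[ℝ] Matrix (Fin d₁) (Fin d₁) ℝ)
    (hskew : ∀ μ, (J μ)ᵀ = -(J μ)) (c : ℝ) (hc : 0 < c)
    (heig : ∀ ω : EuclideanSpace ℝ (Fin d₂), ‖ω‖ = 1 →
      ∀ (t : ℝ) (v : Fin d₁ → ℝ), v ≠ 0 →
        (-(J ω * J ω)).mulVec v = t • v → t = 0 ∨ c ^ 2 < t)
    (P₀ : EuclideanSpace ℝ (Fin d₂) → Matrix (Fin d₁) (Fin d₁) ℝ)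
    (hP₀sym : ∀ μ, μ ≠ 0 → (P₀ μ)ᵀ = P₀ μ)
    (hP₀idem : ∀ μ, μ ≠ 0 → P₀ μ * P₀ μ = P₀ μ)
    (hP₀range : ∀ μ, μ ≠ 0 → ∀ x : Fin d₁ → ℝ, (J μ).mulVec ((P₀ μ).mulVec x) = 0)
    (hP₀id : ∀ μ, μ ≠ 0 → ∀ x : Fin d₁ → ℝ, (J μ).mulVec x = 0 → (P₀ μ).mulVec x = x) :
    ∃ κ κ' : ℝ, 0 < κ ∧ 0 < κ' ∧
      ∀ μ μ' : EuclideanSpace ℝ (Fin d₂), ‖μ‖ = 1 → ‖μ'‖ = 1 →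
        ‖P₀ μ - P₀ μ'‖ ≤ κ * ‖J μ - J μ'‖ ∧
        κ * ‖J μ - J μ'‖ ≤ κ' * ‖μ - μ'‖ := by
  set K := ‖LinearMap.toContinuousLinearMap J‖
  have hJ (μ) : ‖J μ‖ ≤ K * ‖μ‖ := (LinearMap.toContinuousLinearMap J).le_opNorm μ
  have hne {μ : EuclideanSpace ℝ (Fin d₂)} (hμ : ‖μ‖ = 1) : μ ≠ 0 := by rintro rfl; simp at hμ
  have hproj {μ : EuclideanSpace ℝ (Fin d₂)} (hμ : ‖μ‖ = 1) : IsStarProjection (P₀ μ) :=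
    ⟨hP₀idem μ (hne hμ), (conjTranspose_eq_transpose_of_trivial _).trans (hP₀sym μ (hne hμ))⟩
  have hgap {μ : EuclideanSpace ℝ (Fin d₂)} (hμ : ‖μ‖ = 1) (t v) (hv : v ≠ 0)
      (htv : ((J μ)ᵀ * J μ) *ᵥ v = t • v) (ht : t ≠ 0) : c ^ 2 ≤ t := by
    rw [hskew, neg_mul] at htv
    exact ((heig μ hμ t v hv htv).resolve_left ht).le
  refine ⟨4 * (K + 1) / c ^ 2, 4 * (K + 1) / c ^ 2 * (K + 1), by positivity, by positivity,
    fun μ μ' hμ hμ' => ⟨?_, ?_⟩⟩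
  · calc ‖P₀ μ - P₀ μ'‖ ≤ 2 * (‖J μ‖ + ‖J μ'‖) * ‖J μ - J μ'‖ / c ^ 2 :=
          Matrix.norm_sub_le_of_eigenvalue_gap (hproj hμ) (hproj hμ') (hP₀range μ (hne hμ))
            (hP₀range μ' (hne hμ')) (hP₀id μ (hne hμ)) (hP₀id μ' (hne hμ')) (by positivity)
            (hgap hμ) (hgap hμ')
      _ ≤ 2 * (K * 1 + K * 1) * ‖J μ - J μ'‖ / c ^ 2 := by grw [hJ μ, hJ μ', hμ, hμ']
      _ = 4 * K / c ^ 2 * ‖J μ - J μ'‖ := by ring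
      _ ≤ 4 * (K + 1) / c ^ 2 * ‖J μ - J μ'‖ := by gcongr; linarith
  · rw [mul_assoc]
    gcongr
    calc ‖J μ - J μ'‖ ≤ K * ‖μ - μ'‖ := by simpa only [map_sub] using hJ (μ - μ')
      _ ≤ (K + 1) * ‖μ - μ'‖ := by gcongr; linarith

/-- Lemma 2.2(2): under constancy of `dim ker J(μ)` and a uniform spectral gap,
the kernel projections `P₀(μ)` are Lipschitz in `μ` on the unit sphere:
`‖P₀(μ) − P₀(μ')‖ ≤ κ‖J(μ) − J(μ')‖ ≤ κ'|μ − μ'|`. -/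
theorem kernel_projection_lipschitz {d₁ d₂ : ℕ}
    (J : EuclideanSpace ℝ (Fin d₂) →ₗ[ℝ] Matrix (Fin d₁) (Fin d₁) ℝ)
    (hskew : ∀ μ, (J μ)ᵀ = -(J μ)) (c : ℝ) (hc : 0 < c)
    (heig : ∀ ω : EuclideanSpace ℝ (Fin d₂), ‖ω‖ = 1 →
      ∀ (t : ℝ) (v : Fin d₁ → ℝ), v ≠ 0 →
        (-(J ω * J ω)).mulVec v = t • v → t = 0 ∨ c ^ 2 < t)
    (hconst : ∀ μ μ' : EuclideanSpace ℝ (Fin d₂), μ ≠ 0 → μ' ≠ 0 →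
      Module.finrank ℝ (LinearMap.ker (J μ).mulVecLin) =
        Module.finrank ℝ (LinearMap.ker (J μ').mulVecLin))
    (P₀ : EuclideanSpace ℝ (Fin d₂) → Matrix (Fin d₁) (Fin d₁) ℝ)
    (hP₀sym : ∀ μ, μ ≠ 0 → (P₀ μ)ᵀ = P₀ μ)
    (hP₀idem : ∀ μ, μ ≠ 0 → P₀ μ * P₀ μ = P₀ μ)
    (hP₀range : ∀ μ, μ ≠ 0 → ∀ x : Fin d₁ → ℝ, (J μ).mulVec ((P₀ μ).mulVec x) = 0)
    (hP₀id : ∀ μ, μ ≠ 0 → ∀ x : Fin d₁ → ℝ, (J μ).mulVec x = 0 → (P₀ μ).mulVec x = x) :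
    ∃ κ κ' : ℝ, 0 < κ ∧ 0 < κ' ∧
      ∀ μ μ' : EuclideanSpace ℝ (Fin d₂), ‖μ‖ = 1 → ‖μ'‖ = 1 →
        ‖P₀ μ - P₀ μ'‖ ≤ κ * ‖J μ - J μ'‖ ∧
        κ * ‖J μ - J μ'‖ ≤ κ' * ‖μ - μ'‖ :=
  kernel_projection_lipschitz_general J hskew c hc heig P₀ hP₀sym hP₀idem hP₀range hP₀id
end
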